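/- Suppose the optimal mixture loss l*(p) on the segment between vertices e_k and e_{k'} is constant, i.e., l*((1−α)e_k + α e_{k'}) = c for all α ∈ [0,1], where l* is the concave pointwise minimum of linear functions p ↦ Σ_j p_j L_j(h) over h ∈ H (with the minimum attained). Then there exists h* ∈ H that simultaneously minimizes L_k and L_{k'} and satisfies L_k(h*) = L_{k'}(h*) = c; conversely, existence of such h* implies l* is constant on the segment. -/

import Mathlib

open Set

section MixtureOfTwoLosses

variable {H : Type*} {f g : H → ℝ} {c : ℝ}

theorem forall_isLeast_mix_iff :
    (∀ α ∈ Icc (0 : ℝ) 1, IsLeast (range fun x => (1 - α) * f x + α * g x) c) ↔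
      ∃ x, (∀ y, f x ≤ f y) ∧ (∀ y, g x ≤ g y) ∧ f x = c ∧ g x = c := by
  constructor
  · intro hmix
    have hf : IsLeast (range f) c := by simpa using hmix 0 ⟨le_rfl, zero_le_one⟩
    have hg : IsLeast (range g) c := by simpa using hmix 1 ⟨zero_le_one, le_rfl⟩
    -- A minimizer of the balanced mixture averages to `c` while neither loss is below `c`.
    obtain ⟨⟨x, hx⟩, -⟩ := hmix (1 / 2) ⟨by norm_num, by norm_num⟩
    have hfx : c ≤ f x := hf.2 (mem_range_self x)
    have hgx : c ≤ g x := hg.2 (mem_range_self x)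
    have hfc : f x = c := by linarith
    have hgc : g x = c := by linarith
    exact ⟨x, fun y => hfc ▸ hf.2 (mem_range_self y), fun y => hgc ▸ hg.2 (mem_range_self y),
      hfc, hgc⟩
  · rintro ⟨x, hfmin, hgmin, hfc, hgc⟩ α ⟨hα0, hα1⟩
    have hxc : (1 - α) * f x + α * g x = c := by rw [hfc, hgc]; ring
    refine ⟨⟨x, hxc⟩, forall_mem_range.2 fun y => ?_⟩
    have := hfmin y
    have := hgmin y
    calc c = (1 - α) * f x + α * g x := hxc.symm
      _ ≤ (1 - α) * f y + α * g y := by gcongr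

end MixtureOfTwoLosses

section SegmentBetweenVertices

variable {ι : Type*} [DecidableEq ι]

def segmentPoint (k k' : ι) (α : ℝ) : ι → ℝ :=
  fun j => (1 - α) * (if j = k then 1 else 0) + α * (if j = k' then 1 else 0)

theorem segmentPoint_eq (k k' : ι) (α : ℝ) :
    segmentPoint k k' α = (1 - α) • Pi.single k 1 + α • Pi.single k' 1 := by
  funext j
  simp [segmentPoint, Pi.single_apply]

theorem segmentPoint_mem_stdSimplex [Fintype ι] (k k' : ι) {α : ℝ} (hα : α ∈ Icc (0 : ℝ) 1) :
    segmentPoint k k' α ∈ stdSimplex ℝ ι := by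
  rw [segmentPoint_eq]
  exact convex_stdSimplex ℝ ι (single_mem_stdSimplex ℝ k) (single_mem_stdSimplex ℝ k')
    (by linarith [hα.2]) hα.1 (by ring)

theorem sum_segmentPoint_mul [Fintype ι] (k k' : ι) (α : ℝ) (v : ι → ℝ) :
    ∑ j, segmentPoint k k' α j * v j = (1 - α) * v k + α * v k' := by
  simp [segmentPoint, add_mul, Finset.sum_add_distrib, ite_mul]

end SegmentBetweenVertices

/-- The optimal mixture loss `l*` is constant (equal to `c`) along the segment
between vertices `e_k` and `e_{k'}` iff the two groups are oracle-equivalent: there exists a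
common minimizer `h*` of `L_k` and `L_{k'}` with `L_k(h*) = L_{k'}(h*) = c`. -/
theorem constant_segment_iff_oracle_equivalent {H : Type*} (K : ℕ)
    (L : H → Fin K → ℝ) (lstar : (Fin K → ℝ) → ℝ)
    (hmin : ∀ p ∈ stdSimplex ℝ (Fin K), ∃ h : H,
      lstar p = ∑ j, p j * L h j ∧ ∀ h' : H, lstar p ≤ ∑ j, p j * L h' j)
    (k k' : Fin K) (c : ℝ) :
    (∀ α ∈ Set.Icc (0 : ℝ) 1,
        lstar (fun j => (1 - α) * (if j = k then 1 else 0)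
          + α * (if j = k' then 1 else 0)) = c)
    ↔ ∃ hstar : H, (∀ h : H, L hstar k ≤ L h k) ∧ (∀ h : H, L hstar k' ≤ L h k')
        ∧ L hstar k = c ∧ L hstar k' = c := by
  have hseg : ∀ α ∈ Icc (0 : ℝ) 1, IsLeast (range fun h => (1 - α) * L h k + α * L h k')
      (lstar (segmentPoint k k' α)) := by
    intro α hα
    obtain ⟨h, heq, hle⟩ := hmin _ (segmentPoint_mem_stdSimplex k k' hα)
    simp only [sum_segmentPoint_mul] at heq hle
    exact ⟨⟨h, heq.symm⟩, forall_mem_range.2 hle⟩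
  calc _ ↔ ∀ α ∈ Icc (0 : ℝ) 1, IsLeast (range fun h => (1 - α) * L h k + α * L h k') c :=
        forall₂_congr fun α hα => ⟨fun h => h ▸ hseg α hα, (hseg α hα).unique⟩
    _ ↔ _ := forall_isLeast_mix_iff
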